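/- arXiv:1003.6034 — 4 statements merged into one kernel-verified Lean document; each statement's English description precedes it below -/
import Mathlib

section
/- Let τ : ℝ² → ℝ be a norm satisfying the sharp triangle inequality τ(x) + τ(y) - τ(x+y) ≥ κ(‖x‖ + ‖y‖ - ‖x+y‖) for all x, y ∈ ℝ² and some κ > 0, where ‖·‖ is the Euclidean norm. Then for any three points b, b', z ∈ ℝ² such that the distance from z to the line segment from b to b' is at least h, one has τ(z - b) + τ(b' - z) - τ(b' - b) ≥ κ·(‖z-b‖ + ‖b'-z‖ - ‖b'-b‖) ≥ κ·h²/(‖b'-b‖ + 2h). -/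
open scoped RealInnerProductSpace

/-- Parallelogram-type identity for a point on the line through `b`, `b'`. -/
lemma aux_identity (b b' z : EuclideanSpace ℝ (Fin 2)) (t : ℝ) :
    ‖z - (b + t • (b' - b))‖ ^ 2 =
      (1 - t) * ‖z - b‖ ^ 2 + t * ‖z - b'‖ ^ 2 - t * (1 - t) * ‖b' - b‖ ^ 2 := by
  have hrw : z - (b + t • (b' - b)) = (1 - t) • (z - b) + t • (z - b') := by
    module
  have hD : ‖b' - b‖ ^ 2 = ‖z - b‖ ^ 2 - 2 * ⟪z - b, z - b'⟫ + ‖z - b'‖ ^ 2 := by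
    have : b' - b = (z - b) - (z - b') := by abel
    rw [this, norm_sub_sq_real]
  have hp : ‖z - (b + t • (b' - b))‖ ^ 2 =
      (1 - t) ^ 2 * ‖z - b‖ ^ 2 + 2 * ((1 - t) * t * ⟪z - b, z - b'⟫)
        + t ^ 2 * ‖z - b'‖ ^ 2 := by
    rw [hrw, norm_add_sq_real, real_inner_smul_left, real_inner_smul_right,
      norm_smul, norm_smul, mul_pow, mul_pow]
    simp [Real.norm_eq_abs, sq_abs]
    ring
  rw [hp, hD]; ring

/-- Purely arithmetic finishing step. -/
lemma aux_arith (D e h : ℝ) (hh : 0 < h) (hD0 : 0 ≤ D) (he0 : 0 ≤ e)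
    (hkey : 4 * h ^ 2 ≤ e ^ 2 + 2 * D * e) : h ^ 2 ≤ e * (D + 2 * h) := by
  rcases le_total e (2 * h) with hcase | hcase
  · nlinarith [mul_nonneg he0 (by linarith : (0:ℝ) ≤ 2 * h - e), mul_nonneg he0 hD0]
  · nlinarith [mul_nonneg (by linarith : (0:ℝ) ≤ e - 2 * h) hh.le, mul_nonneg he0 hD0]

/-- Geometric lemma: excess length lower bound. -/
lemma aux_geom (b b' z : EuclideanSpace ℝ (Fin 2)) (h : ℝ) (hh : 0 < h)
    (hdist : h ≤ Metric.infDist z (segment ℝ b b')) :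
    h ^ 2 / (‖b' - b‖ + 2 * h) ≤ ‖z - b‖ + ‖b' - z‖ - ‖b' - b‖ := by
  set a := ‖z - b‖ with ha
  set c := ‖b' - z‖ with hc
  set D := ‖b' - b‖ with hD
  have hD0 : 0 ≤ D := norm_nonneg _
  have ha0 : 0 ≤ a := norm_nonneg _
  have hc0 : 0 ≤ c := norm_nonneg _
  -- triangle inequalities
  have htri1 : D ≤ a + c := by
    have := norm_add_le (z - b) (b' - z)
    have h2 : z - b + (b' - z) = b' - b := by abel
    rw [h2] at this; linarith [this]
  have htri2 : a ≤ D + c := by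
    have := norm_add_le (b' - b) (z - b')
    have h2 : b' - b + (z - b') = z - b := by abel
    rw [h2] at this
    have : a ≤ D + ‖z - b'‖ := this
    rwa [show ‖z - b'‖ = c by rw [hc, norm_sub_rev]] at this
  have htri3 : c ≤ D + a := by
    have := norm_add_le (b - b') (z - b)
    have h2 : b - b' + (z - b) = z - b' := by abel
    rw [h2] at this
    have h3 : ‖z - b'‖ = c := by rw [hc, norm_sub_rev]
    have h4 : ‖b - b'‖ = D := by rw [hD, norm_sub_rev]
    rw [h3, h4] at this; linarith
  have hdenom : 0 < D + 2 * h := by linarith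
  rw [div_le_iff₀ hdenom]
  rcases eq_or_lt_of_le hD0 with hDz | hDpos
  · -- D = 0 : b' = b
    have hbb : b' = b := by
      have : b' - b = 0 := norm_eq_zero.mp hDz.symm
      exact sub_eq_zero.mp this
    have hseg : segment ℝ b b' = {b} := by rw [hbb, segment_same]
    have hin : h ≤ dist z b := by
      have := Metric.infDist_le_dist_of_mem (x := z) (s := segment ℝ b b')
        (y := b) (by rw [hseg]; exact rfl)
      linarith
    have haa : h ≤ a := by rwa [dist_eq_norm] at hin
    have hca : c = a := by rw [hc, ha, hbb, norm_sub_rev]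
    rw [← hDz] at *
    nlinarith
  · -- D > 0
    set t := (D + a - c) / (2 * D) with htdef
    have h2D : (0:ℝ) < 2 * D := by linarith
    have ht0 : 0 ≤ t := div_nonneg (by linarith) (by linarith)
    have ht1 : t ≤ 1 := by
      rw [div_le_one h2D]; linarith
    set p := b + t • (b' - b) with hp
    have hpmem : p ∈ segment ℝ b b' := by
      refine ⟨1 - t, t, by linarith, ht0, by ring, ?_⟩
      rw [hp]; module
    have hzp : h ≤ ‖z - p‖ := by
      have := Metric.infDist_le_dist_of_mem (x := z) hpmem
      rw [dist_eq_norm] at this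
      linarith
    have hsq : h ^ 2 ≤ ‖z - p‖ ^ 2 := by
      have := pow_le_pow_left₀ hh.le hzp 2
      linarith
    have hid := aux_identity b b' z t
    have hcz : ‖z - b'‖ = c := by rw [hc, norm_sub_rev]
    rw [hcz] at hid
    have hfe : (1 - t) * a ^ 2 + t * c ^ 2 - t * (1 - t) * D ^ 2 =
        ((a + c) ^ 2 - D ^ 2) / 4 - (a - c) ^ 2 * ((a + c) - D) / (2 * D) := by
      rw [htdef]
      field_simp
      ring
    have hkey : 4 * h ^ 2 ≤ (a + c - D) ^ 2 + 2 * D * (a + c - D) := by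
      have h1 : h ^ 2 ≤ ((a + c) ^ 2 - D ^ 2) / 4 - (a - c) ^ 2 * ((a + c) - D) / (2 * D) := by
        rw [← hfe, ← hid]; rw [hp] at hsq; exact hsq
      have h2 : 0 ≤ (a - c) ^ 2 * ((a + c) - D) / (2 * D) :=
        div_nonneg (mul_nonneg (sq_nonneg _) (by linarith)) (by linarith)
      nlinarith
    exact aux_arith D (a + c - D) h hh hD0 (by linarith) hkey
/-- sharp triangle inequality implies excess-length lower bound for
a point at distance ≥ h from the segment bb'. -/
theorem stmt_0
    (τ : EuclideanSpace ℝ (Fin 2) → ℝ) (κ : ℝ) (hκ : 0 < κ)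
    (hsub : ∀ x y, τ (x + y) ≤ τ x + τ y)
    (hhom : ∀ (c : ℝ) x, τ (c • x) = |c| * τ x)
    (hdef : ∀ x, τ x = 0 ↔ x = 0)
    (hSTI : ∀ x y : EuclideanSpace ℝ (Fin 2),
      κ * (‖x‖ + ‖y‖ - ‖x + y‖) ≤ τ x + τ y - τ (x + y))
    (b b' z : EuclideanSpace ℝ (Fin 2)) (h : ℝ) (hh : 0 < h)
    (hdist : h ≤ Metric.infDist z (segment ℝ b b')) :
    κ * (‖z - b‖ + ‖b' - z‖ - ‖b' - b‖) ≤ τ (z - b) + τ (b' - z) - τ (b' - b) ∧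
    κ * (h ^ 2 / (‖b' - b‖ + 2 * h)) ≤ κ * (‖z - b‖ + ‖b' - z‖ - ‖b' - b‖) := by
  constructor
  · have hsum : z - b + (b' - z) = b' - b := by abel
    have := hSTI (z - b) (b' - z)
    rwa [hsum] at this
  · exact mul_le_mul_of_nonneg_left (aux_geom b b' z h hh hdist) hκ.le
end

section
/- For any three points b, b', z in ℝ² (Euclidean norm ‖·‖), if the distance from z to the segment joining b and b' is at least h ≥ 0, then ‖z-b‖ + ‖b'-z‖ - ‖b'-b‖ ≥ 2(√(h² + ‖b'-b‖²/4) - ‖b'-b‖/2), and in particular if ‖b'-b‖ ≤ 3n and h ≥ n^a with a > 1/2 and n ≥ 1, then ‖z-b‖ + ‖b'-z‖ - ‖b'-b‖ ≥ c·n^{2a-1} for a universal constant c > 0. -/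
/-!
Put `x = ‖z - b‖`, `y = ‖z - b'‖`, `d = ‖b' - b‖`, `s = x + y`, and let `q` be the point dividing
`[b, b']` in the ratio `x : y` (the foot of the bisector of the angle at `z`). The identity
`‖a • u + c • v‖² = a ‖u‖² + c ‖v‖² - a c ‖u - v‖²` (`a + c = 1`) gives
`‖z - q‖² = x y (1 - d² / s²)`, so by AM-GM `4 h² ≤ 4 ‖z - q‖² ≤ s² - d²`, i.e.
`s - d ≥ √(4 h² + d²) - d = 4 h² / (√(4 h² + d²) + d)`. For `h = n ^ a` with `1 ≤ n ^ a ≤ n` and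
`d ≤ 3n`, the last denominator is at most `2 (h + d) ≤ 8 n`, which gives the bound `n ^ (2a - 1) / 2`.
-/

open Metric

section InnerProductSpace

variable {E : Type*} [NormedAddCommGroup E] [InnerProductSpace ℝ E]

theorem norm_smul_add_smul_sq {a c : ℝ} (hac : a + c = 1) (u v : E) :
    ‖a • u + c • v‖ ^ 2 = a * ‖u‖ ^ 2 + c * ‖v‖ ^ 2 - a * c * ‖u - v‖ ^ 2 := by
  rw [norm_add_sq_real, norm_sub_sq_real, norm_smul, norm_smul, real_inner_smul_left,
    real_inner_smul_right, Real.norm_eq_abs, Real.norm_eq_abs, mul_pow, mul_pow, sq_abs, sq_abs]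
  obtain rfl := eq_sub_of_add_eq hac
  ring

theorem four_mul_infDist_segment_sq_add_dist_sq_le (b b' z : E) :
    4 * infDist z (segment ℝ b b') ^ 2 + dist b b' ^ 2 ≤ (dist z b + dist z b') ^ 2 := by
  set x := dist z b
  set y := dist z b'
  set d := dist b b'
  have hd : d ≤ x + y := dist_triangle_left b b' z
  have hx : 0 ≤ x := dist_nonneg
  have hy : 0 ≤ y := dist_nonneg
  rcases eq_or_lt_of_le (add_nonneg hx hy) with hs | hs
  · have hzb : z = b := dist_eq_zero.mp (by linarith)
    have hd0 : d = 0 := by linarith [dist_nonneg (x := b) (y := b')]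
    rw [infDist_zero_of_mem (hzb ▸ left_mem_segment ℝ b b'), hd0, ← hs]
    norm_num
  set s := x + y
  set q := (y / s) • b + (x / s) • b'
  have hweights : y / s + x / s = 1 := by field_simp; ring
  have hq : q ∈ segment ℝ b b' := ⟨y / s, x / s, by positivity, by positivity, hweights, rfl⟩
  have hzq : dist z q ^ 2 = x * y * (1 - (d / s) ^ 2) := by
    have : z - q = (y / s) • (z - b) + (x / s) • (z - b') := by
      rw [smul_sub, smul_sub, sub_add_sub_comm, ← add_smul, hweights, one_smul]
    rw [dist_eq_norm, this, norm_smul_add_smul_sq hweights, ← dist_eq_norm, ← dist_eq_norm,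
      sub_sub_sub_cancel_left, ← dist_eq_norm, dist_comm b' b]
    field_simp
    ring
  have hinf : infDist z (segment ℝ b b') ^ 2 ≤ dist z q ^ 2 :=
    pow_le_pow_left₀ infDist_nonneg (infDist_le_dist_of_mem hq) 2
  have hratio : (d / s) ^ 2 ≤ 1 := by
    rw [div_pow, div_le_one (by positivity)]
    exact pow_le_pow_left₀ dist_nonneg hd 2
  calc 4 * infDist z (segment ℝ b b') ^ 2 + d ^ 2
      ≤ 4 * (x * y) * (1 - (d / s) ^ 2) + d ^ 2 := by rw [hzq] at hinf; linarith
    _ ≤ s ^ 2 * (1 - (d / s) ^ 2) + d ^ 2 := by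
        gcongr
        show 4 * (x * y) ≤ (x + y) ^ 2
        nlinarith [sq_nonneg (x - y)]
    _ = s ^ 2 := by field_simp; ring

theorem two_mul_sqrt_sub_le_dist_add_dist_sub_dist (b b' z : E) {h : ℝ} (h0 : 0 ≤ h)
    (hh : h ≤ infDist z (segment ℝ b b')) :
    2 * (√(h ^ 2 + dist b b' ^ 2 / 4) - dist b b' / 2) ≤ dist z b + dist z b' - dist b b' := by
  have key := four_mul_infDist_segment_sq_add_dist_sq_le b b' z
  have : h ^ 2 ≤ infDist z (segment ℝ b b') ^ 2 := pow_le_pow_left₀ h0 hh 2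
  have hsqrt : √(h ^ 2 + dist b b' ^ 2 / 4) ≤ (dist z b + dist z b') / 2 := by
    rw [Real.sqrt_le_left (by positivity)]
    linarith
  linarith

end InnerProductSpace

theorem two_mul_sq_div_add_le_two_mul_sqrt_sub {h d : ℝ} (h0 : 0 ≤ h) (d0 : 0 ≤ d) :
    2 * h ^ 2 / (h + d) ≤ 2 * (√(h ^ 2 + d ^ 2 / 4) - d / 2) := by
  set r := √(h ^ 2 + d ^ 2 / 4)
  have hr : r ^ 2 = h ^ 2 + d ^ 2 / 4 := Real.sq_sqrt (by positivity)
  have hr_le : r ≤ h + d / 2 := by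
    rw [Real.sqrt_le_left (by positivity)]
    nlinarith
  have hr_ge : d / 2 ≤ r := Real.le_sqrt_of_sq_le (by nlinarith)
  rcases eq_or_lt_of_le (add_nonneg h0 d0) with hhd | hhd
  · rw [← hhd, div_zero]
    linarith
  · rw [div_le_iff₀ hhd]
    -- `(r - d/2)(r + d/2) = h²` and `r + d/2 ≤ h + d`
    nlinarith

/-- excess length of the broken line b → z → b' when z is at distance
at least h from the segment bb', and the n^(2a-1) lower bound. -/
theorem stmt_1 :
    (∀ (b b' z : EuclideanSpace ℝ (Fin 2)) (h : ℝ), 0 ≤ h →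
      h ≤ Metric.infDist z (segment ℝ b b') →
      2 * (Real.sqrt (h ^ 2 + ‖b' - b‖ ^ 2 / 4) - ‖b' - b‖ / 2)
        ≤ ‖z - b‖ + ‖b' - z‖ - ‖b' - b‖) ∧
    (∃ c : ℝ, 0 < c ∧
      ∀ (b b' z : EuclideanSpace ℝ (Fin 2)) (h n a : ℝ), 1 ≤ n → 1 / 2 < a → a ≤ 1 →
        ‖b' - b‖ ≤ 3 * n → n ^ a ≤ h →
        h ≤ Metric.infDist z (segment ℝ b b') →
        c * n ^ (2 * a - 1) ≤ ‖z - b‖ + ‖b' - z‖ - ‖b' - b‖) := by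
  simp only [← dist_eq_norm]
  refine ⟨fun b b' z h h0 hh ↦ ?_, 1 / 2, by norm_num, fun b b' z h n a hn _ ha hd hnh hh ↦ ?_⟩
  all_goals rw [dist_comm b' z, dist_comm b' b]
  · exact two_mul_sqrt_sub_le_dist_add_dist_sub_dist b b' z h0 hh
  rw [dist_comm b' b] at hd
  set H := n ^ a
  have hn0 : 0 < n := by linarith
  have hH1 : 1 ≤ H := Real.one_le_rpow hn (by linarith)
  have hHn : H ≤ n := Real.rpow_le_self_of_one_le hn ha
  have hpow : n ^ (2 * a - 1) = H ^ 2 / n := by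
    rw [Real.rpow_sub hn0, Real.rpow_one, mul_comm, ← Nat.cast_ofNat, Real.rpow_mul_natCast hn0.le]
  calc 1 / 2 * n ^ (2 * a - 1) = 2 * H ^ 2 / (4 * n) := by rw [hpow]; field_simp; ring
    _ ≤ 2 * H ^ 2 / (H + dist b b') :=
        div_le_div_of_nonneg_left (by positivity) (by linarith [dist_nonneg (x := b) (y := b')])
          (by linarith)
    _ ≤ 2 * (√(H ^ 2 + dist b b' ^ 2 / 4) - dist b b' / 2) :=
        two_mul_sq_div_add_le_two_mul_sqrt_sub (by positivity) dist_nonneg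
    _ ≤ dist z b + dist z b' - dist b b' :=
        two_mul_sqrt_sub_le_dist_add_dist_sub_dist b b' z (by positivity) (hnh.trans hh)
end

section
/- Let b₁, b₂, b₁', b₂' be points on the boundary of the square [-n,n]² such that the segments b₁b₁' and b₂b₂' both intersect the square [-2n^a, 2n^a]² with a < 1, and b₁, b₂ lie on the same 'side' of both segments (i.e., the two segments are 'diametrically opposed' pairs as in the paper). Then max(‖b₁ - b₂‖₁, ‖b₁' - b₂'‖₁) ≤ C n^a for a universal constant C, provided the segments b₁b₁' and b₂b₂' are disjoint and n is large enough. -/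
/-!
In the sup norm the square `[-n, n]²` is the closed ball of radius `n` and its boundary is the
sphere. A chord `[b, b']` of this sphere passing within `ρ` of the origin has almost antipodal
endpoints: `‖b + b'‖ ≤ 4ρ`. Because `[b₁, b₁']` passes through the interior of the square, its
line meets the square only in the chord itself, so the disjoint chord `[b₂, b₂']` lies strictly on
one side of that line: the cross products `(b₁' - b₁) × (b₂ - b₁)` and `(b₁' - b₁) × (b₂' - b₁)`
have the same sign. Their sum is `O(n^(1+a))` since `b₁ + b₁' ≈ 0 ≈ b₂ + b₂'`, which forces
`b₁ × b₂ = O(n^(1+a))`, i.e. `b₂` is within `O(n^a)` of `b₁` or of `-b₁`. In the second case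
`b₂' ≈ b₁`, and the labelling hypothesis makes `b₁ - b₂` small anyway; finally
`b₁' - b₂' ≈ b₂ - b₁`.
-/

open Set AffineMap

section NormedSpace

variable {E : Type*} [SeminormedAddCommGroup E] [NormedSpace ℝ E]

theorem norm_add_le_of_mem_segment {b b' z : E} (hbb' : ‖b‖ = ‖b'‖)
    (hz : z ∈ segment ℝ b b') : ‖b + b'‖ ≤ 4 * ‖z‖ := by
  obtain ⟨c, d, hc, hd, hcd, rfl⟩ := hz
  have hcb : ‖c • b‖ = c * ‖b‖ := by rw [norm_smul, Real.norm_of_nonneg hc]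
  have hdb' : ‖d • b'‖ = d * ‖b‖ := by rw [norm_smul, Real.norm_of_nonneg hd, hbb']
  have hcd_le : |c - d| * ‖b‖ ≤ ‖c • b + d • b'‖ := by
    have h₁ : ‖c • b‖ ≤ ‖c • b + d • b'‖ + ‖d • b'‖ := by
      simpa using norm_sub_le (c • b + d • b') (d • b')
    have h₂ : ‖d • b'‖ ≤ ‖c • b + d • b'‖ + ‖c • b‖ := by
      simpa using norm_sub_le (c • b + d • b') (c • b)
    rcases abs_cases (c - d) with ⟨h, -⟩ | ⟨h, -⟩ <;> rw [h] <;> linarith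
  obtain rfl : d = 1 - c := by linarith
  calc ‖b + b'‖ = ‖(2:ℝ) • (c • b + (1 - c) • b') + (c - (1 - c)) • (b' - b)‖ := by
        congr 1; module
    _ ≤ 2 * ‖c • b + (1 - c) • b'‖ + |c - (1 - c)| * (‖b'‖ + ‖b‖) := by
        refine (norm_add_le _ _).trans (add_le_add ?_ ?_)
        · rw [norm_smul, Real.norm_two]
        · rw [norm_smul, Real.norm_eq_abs]
          exact mul_le_mul_of_nonneg_left (norm_sub_le _ _) (abs_nonneg _)
    _ ≤ 4 * ‖c • b + (1 - c) • b'‖ := by rw [← hbb']; linarith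

theorem le_one_of_norm_lineMap_le {b b' : E} {R s t : ℝ} (hb' : R ≤ ‖b'‖) (hs : s ≤ 1)
    (hsR : ‖lineMap b b' s‖ < R) (htR : ‖lineMap b b' t‖ ≤ R) : t ≤ 1 := by
  by_contra! ht
  have key : (t - s) • b' = (t - 1) • lineMap b b' s + (1 - s) • lineMap b b' t := by
    simp only [lineMap_apply_module]; module
  have := norm_add_le ((t - 1) • lineMap b b' s) ((1 - s) • lineMap b b' t)
  rw [← key, norm_smul, norm_smul, norm_smul, Real.norm_of_nonneg (by linarith),
    Real.norm_of_nonneg (by linarith), Real.norm_of_nonneg (by linarith)] at this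
  nlinarith [mul_le_mul_of_nonneg_left htR (by linarith : (0:ℝ) ≤ 1 - s)]

theorem lineMap_mem_segment_of_norm_le {b b' u : E} {R t : ℝ} (hb : R ≤ ‖b‖) (hb' : R ≤ ‖b'‖)
    (hu : u ∈ segment ℝ b b') (huR : ‖u‖ < R) (htR : ‖lineMap b b' t‖ ≤ R) :
    lineMap b b' t ∈ segment ℝ b b' := by
  rw [segment_eq_image_lineMap] at hu ⊢
  obtain ⟨s, ⟨hs₀, hs₁⟩, rfl⟩ := hu
  refine ⟨t, ⟨?_, le_one_of_norm_lineMap_le hb' hs₁ huR htR⟩, rfl⟩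
  rw [← lineMap_apply_one_sub] at huR htR
  linarith [le_one_of_norm_lineMap_le (t := 1 - t) hb (by linarith) huR htR]

theorem abs_le_abs_add_of_ne_zero_on_segment {f : E → ℝ} {a b : E}
    (hf : ContinuousOn f (segment ℝ a b)) (h : ∀ z ∈ segment ℝ a b, f z ≠ 0) :
    |f a| ≤ |f a + f b| := by
  have hivt : ∀ {x y : E}, x ∈ segment ℝ a b → y ∈ segment ℝ a b → ¬(f x ≤ 0 ∧ 0 ≤ f y) := by
    rintro x y hx hy ⟨hfx, hfy⟩
    obtain ⟨z, hz, hfz⟩ := (convex_segment a b).isPreconnected.intermediate_value hx hy hf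
      ⟨hfx, hfy⟩
    exact h z hz hfz
  have ha := left_mem_segment ℝ a b
  have hb := right_mem_segment ℝ a b
  rw [(abs_add_eq_add_abs_iff _ _).2]
  · linarith [abs_nonneg (f b)]
  · by_contra! hsign
    rcases le_total (f a) 0 with hfa | hfa
    · exact hivt ha hb ⟨hfa, (hsign.2 hfa).le⟩
    · exact hivt hb ha ⟨(hsign.1 hfa).le, hfa⟩

end NormedSpace

def cross (p q : ℝ × ℝ) : ℝ := p.1 * q.2 - p.2 * q.1

theorem Prod.norm_swap {E F : Type*} [Norm E] [Norm F] (p : E × F) : ‖p.swap‖ = ‖p‖ := by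
  rw [Prod.norm_def, Prod.norm_def, max_comm, Prod.fst_swap, Prod.snd_swap]

theorem abs_fst_add_abs_snd_le (p : ℝ × ℝ) : |p.1| + |p.2| ≤ 2 * ‖p‖ := by
  linarith [norm_fst_le p, norm_snd_le p, Real.norm_eq_abs p.1, Real.norm_eq_abs p.2]

theorem Icc_neg_eq_closedBall (R : ℝ) :
    Icc ((-R, -R) : ℝ × ℝ) (R, R) = Metric.closedBall 0 R := by
  ext p
  simp only [mem_Icc, Prod.le_def, mem_closedBall_zero_iff, Prod.norm_def, max_le_iff,
    Real.norm_eq_abs, abs_le]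
  tauto

theorem mem_frontier_Icc_neg_iff {R : ℝ} (hR : 0 < R) {p : ℝ × ℝ} :
    p ∈ frontier (Icc ((-R, -R) : ℝ × ℝ) (R, R)) ↔ ‖p‖ = R := by
  rw [Icc_neg_eq_closedBall, frontier_closedBall _ hR.ne', mem_sphere_zero_iff_norm]

theorem abs_cross_le (p q : ℝ × ℝ) : |cross p q| ≤ 2 * ‖p‖ * ‖q‖ := by
  have h₁ : |p.1 * q.2| ≤ ‖p‖ * ‖q‖ := by
    rw [abs_mul]
    exact mul_le_mul (norm_fst_le p) (norm_snd_le q) (abs_nonneg _) (norm_nonneg _)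
  have h₂ : |p.2 * q.1| ≤ ‖p‖ * ‖q‖ := by
    rw [abs_mul]
    exact mul_le_mul (norm_snd_le p) (norm_fst_le q) (abs_nonneg _) (norm_nonneg _)
  calc |cross p q| ≤ |p.1 * q.2| + |p.2 * q.1| := abs_sub _ _
    _ ≤ 2 * ‖p‖ * ‖q‖ := by linarith

theorem exists_eq_smul_of_cross_eq_zero {v w : ℝ × ℝ} (hv : v ≠ 0) (h : cross v w = 0) :
    ∃ t : ℝ, w = t • v := by
  unfold cross at h
  by_cases hv₁ : v.1 = 0
  · have hv₂ : v.2 ≠ 0 := fun hv₂ => hv (Prod.ext hv₁ hv₂)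
    refine ⟨w.2 / v.2, Prod.ext ?_ ?_⟩ <;> simp only [Prod.smul_fst, Prod.smul_snd, smul_eq_mul]
    · rw [hv₁] at h ⊢
      simpa [hv₂] using h
    · field_simp
  · refine ⟨w.1 / v.1, Prod.ext ?_ ?_⟩ <;> simp only [Prod.smul_fst, Prod.smul_snd, smul_eq_mul]
    · field_simp
    · field_simp
      linear_combination h

theorem abs_cross_le_abs_add_of_disjoint {b₁ b₁' b₂ b₂' u : ℝ × ℝ} {R : ℝ}
    (hb₁ : ‖b₁‖ = R) (hb₁' : ‖b₁'‖ = R) (hu : u ∈ segment ℝ b₁ b₁') (huR : ‖u‖ < R)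
    (hb₂ : ‖b₂‖ ≤ R) (hb₂' : ‖b₂'‖ ≤ R)
    (hdisj : Disjoint (segment ℝ b₁ b₁') (segment ℝ b₂ b₂')) :
    |cross (b₁' - b₁) (b₂ - b₁)|
      ≤ |cross (b₁' - b₁) (b₂ - b₁) + cross (b₁' - b₁) (b₂' - b₁)| := by
  refine abs_le_abs_add_of_ne_zero_on_segment (f := fun z => cross (b₁' - b₁) (z - b₁))
    (by unfold cross; fun_prop) fun z hz hfz => ?_
  have hv : b₁' - b₁ ≠ 0 := by
    intro hv
    rw [sub_eq_zero.1 hv, segment_same, mem_singleton_iff] at hu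
    rw [hu, hb₁] at huR
    exact huR.false
  obtain ⟨t, ht⟩ := exists_eq_smul_of_cross_eq_zero hv hfz
  have hzt : z = lineMap b₁ b₁' t := by
    rw [lineMap_apply, vsub_eq_sub, vadd_eq_add, ← ht, sub_add_cancel]
  have hzR : ‖z‖ ≤ R := by
    simpa using (convex_closedBall (0 : ℝ × ℝ) R).segment_subset (by simpa using hb₂)
      (by simpa using hb₂') hz
  rw [hzt] at hz hzR
  exact disjoint_left.1 hdisj (lineMap_mem_segment_of_norm_le hb₁.ge hb₁'.ge hu huR hzR) hz

theorem abs_cross_le_of_abs_cross_le_abs_add {b₁ b₁' b₂ b₂' : ℝ × ℝ} {R ε : ℝ}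
    (hb₁ : ‖b₁‖ ≤ R) (hb₁' : ‖b₁'‖ ≤ R) (hb₂ : ‖b₂‖ ≤ R)
    (hε₁ : ‖b₁ + b₁'‖ ≤ ε) (hε₂ : ‖b₂ + b₂'‖ ≤ ε)
    (h : |cross (b₁' - b₁) (b₂ - b₁)|
      ≤ |cross (b₁' - b₁) (b₂ - b₁) + cross (b₁' - b₁) (b₂' - b₁)|) :
    |cross b₁ b₂| ≤ 6 * ε * R := by
  have hsum : cross (b₁' - b₁) (b₂ - b₁) + cross (b₁' - b₁) (b₂' - b₁)
      = cross (b₁' - b₁) ((b₂ + b₂') - (b₁ + b₁')) := by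
    simp only [cross, Prod.fst_sub, Prod.snd_sub, Prod.fst_add, Prod.snd_add]; ring
  have hdiff : 2 * cross b₁ b₂ = cross (b₁ + b₁') (b₂ - b₁) - cross (b₁' - b₁) (b₂ - b₁) := by
    simp only [cross, Prod.fst_sub, Prod.snd_sub, Prod.fst_add, Prod.snd_add]; ring
  have hR : 0 ≤ R := (norm_nonneg _).trans hb₁
  have hwidth : ∀ {p q : ℝ × ℝ}, ‖p‖ ≤ R → ‖q‖ ≤ R → ‖p - q‖ ≤ 2 * R := fun hp hq =>
    (norm_sub_le _ _).trans (by linarith)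
  have h₁ : |cross (b₁ + b₁') (b₂ - b₁)| ≤ 4 * ε * R := by
    have := abs_cross_le (b₁ + b₁') (b₂ - b₁)
    nlinarith [mul_le_mul hε₁ (hwidth hb₂ hb₁) (norm_nonneg _) ((norm_nonneg _).trans hε₁)]
  have h₂ : |cross (b₁' - b₁) ((b₂ + b₂') - (b₁ + b₁'))| ≤ 8 * ε * R := by
    have := abs_cross_le (b₁' - b₁) ((b₂ + b₂') - (b₁ + b₁'))
    have hs : ‖(b₂ + b₂') - (b₁ + b₁')‖ ≤ 2 * ε := (norm_sub_le _ _).trans (by linarith)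
    nlinarith [mul_le_mul (hwidth hb₁' hb₁) hs (norm_nonneg _) (by linarith)]
  have := abs_sub (cross (b₁ + b₁') (b₂ - b₁)) (cross (b₁' - b₁) (b₂ - b₁))
  rw [← hdiff, abs_mul, abs_two] at this
  rw [hsum] at h
  linarith

theorem norm_sub_le_of_fst_eq_of_abs_cross_le {b₁ b₂ : ℝ × ℝ} {R K : ℝ} (hR : 0 < R)
    (hb₁ : ‖b₁‖ = R) (hx₁ : b₁.1 = R) (hb₂ : ‖b₂‖ = R) (hx₂ : 0 ≤ b₂.1)
    (hK : |cross b₁ b₂| ≤ K * R) : ‖b₁ - b₂‖ ≤ 2 * K := by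
  obtain ⟨x₁, y₁⟩ := b₁
  obtain ⟨x₂, y₂⟩ := b₂
  simp only at hx₁ hx₂
  subst hx₁
  simp only [Prod.mk_sub_mk, Prod.norm_mk, Real.norm_eq_abs, cross] at hb₁ hb₂ hK ⊢
  have hy₁ : |y₁| ≤ x₁ := hb₁ ▸ le_max_right _ _
  have hx₂R : x₂ ≤ x₁ := (le_abs_self x₂).trans (hb₂ ▸ le_max_left _ _)
  have hK₀ : 0 ≤ K := nonneg_of_mul_nonneg_left ((abs_nonneg _).trans hK) hR
  have hx : x₁ - x₂ ≤ K := by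
    rcases max_choice |x₂| |y₂| with h | h <;> rw [h] at hb₂
    · rw [abs_of_nonneg hx₂] at hb₂; linarith
    · have := abs_sub_abs_le_abs_sub (x₁ * y₂) (y₁ * x₂)
      rw [abs_mul, abs_mul, hb₂, abs_of_pos hR, abs_of_nonneg hx₂] at this
      nlinarith [mul_le_mul_of_nonneg_right hy₁ hx₂]
  have hy : |y₁ - y₂| ≤ 2 * K := by
    have hid : x₁ * (y₁ - y₂) = y₁ * (x₁ - x₂) - (x₁ * y₂ - y₁ * x₂) := by ring
    have := abs_sub (y₁ * (x₁ - x₂)) (x₁ * y₂ - y₁ * x₂)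
    rw [← hid, abs_mul, abs_mul, abs_of_pos hR, abs_of_nonneg (by linarith : 0 ≤ x₁ - x₂)]
      at this
    nlinarith [mul_le_mul hy₁ hx (by linarith) hR.le]
  rw [max_le_iff, abs_of_nonneg (by linarith : 0 ≤ x₁ - x₂)]
  exact ⟨by linarith, hy⟩

theorem norm_sub_le_or_norm_add_le_of_abs_cross_le {b₁ b₂ : ℝ × ℝ} {R K : ℝ} (hR : 0 < R)
    (hb₁ : ‖b₁‖ = R) (hb₂ : ‖b₂‖ = R) (hK : |cross b₁ b₂| ≤ K * R) :
    ‖b₁ - b₂‖ ≤ 2 * K ∨ ‖b₁ + b₂‖ ≤ 2 * K := by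
  wlog hx₁ : |b₁.1| = R generalizing b₁ b₂
  · have hy₁ : |b₁.2| = R := by
      rcases max_choice ‖b₁.1‖ ‖b₁.2‖ with h | h <;> rw [← Prod.norm_def, hb₁] at h
      exacts [absurd h.symm hx₁, h.symm]
    have hK' : |cross b₁.swap b₂.swap| ≤ K * R := by
      rwa [cross, abs_sub_comm]
    simpa only [← Prod.swap_sub, ← Prod.swap_add, Prod.norm_swap] using
      this (b₁.norm_swap.trans hb₁) (b₂.norm_swap.trans hb₂) hK' hy₁
  wlog hx₁' : b₁.1 = R generalizing b₁ b₂
  · have hK' : |cross (-b₁) (-b₂)| ≤ K * R := by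
      simpa [cross] using hK
    have hnx₁ : (-b₁).1 = R := by
      rcases abs_eq hR.le |>.1 hx₁ with h | h
      exacts [absurd h hx₁', by simp [h]]
    simpa only [← neg_add, neg_sub_neg, norm_neg, norm_sub_rev] using
      this (by rwa [norm_neg]) (by rwa [norm_neg]) hK' (by rwa [Prod.fst_neg, abs_neg]) hnx₁
  wlog hx₂ : 0 ≤ b₂.1 generalizing b₂
  · have hK' : |cross b₁ (-b₂)| ≤ K * R := by
      have hneg : cross b₁ (-b₂) = -cross b₁ b₂ := by
        simp only [cross, Prod.fst_neg, Prod.snd_neg]; ring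
      rwa [hneg, abs_neg]
    simpa only [sub_neg_eq_add, ← sub_eq_add_neg, or_comm] using
      this (by rwa [norm_neg]) hK' (by simp only [Prod.fst_neg]; linarith)
  exact Or.inl (norm_sub_le_of_fst_eq_of_abs_cross_le hR hb₁ hx₁' hb₂ hx₂ hK)

theorem max_l1_le_of_norm_sub_le_or_norm_add_le {b₁ b₂ b₁' b₂' : ℝ × ℝ} {δ ε : ℝ}
    (hε₁ : ‖b₁ + b₁'‖ ≤ ε) (hε₂ : ‖b₂ + b₂'‖ ≤ ε) (hδ : ‖b₁ - b₂‖ ≤ δ ∨ ‖b₁ + b₂‖ ≤ δ)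
    (hpair : |(b₁ - b₂).1| + |(b₁ - b₂).2| ≤ |(b₁ - b₂').1| + |(b₁ - b₂').2|) :
    max (|(b₁ - b₂).1| + |(b₁ - b₂).2|) (|(b₁' - b₂').1| + |(b₁' - b₂').2|)
      ≤ 4 * (δ + 2 * ε) := by
  have hε : 0 ≤ ε := (norm_nonneg _).trans hε₂
  have hδ₀ : 0 ≤ δ := hδ.elim (norm_nonneg _).trans (norm_nonneg _).trans
  have hnear : |(b₁ - b₂).1| + |(b₁ - b₂).2| ≤ 2 * (δ + ε) := by
    rcases hδ with hδ | hδ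
    · linarith [abs_fst_add_abs_snd_le (b₁ - b₂)]
    · have : ‖b₁ - b₂'‖ ≤ ‖b₁ + b₂‖ + ‖b₂ + b₂'‖ := by
        rw [show b₁ - b₂' = (b₁ + b₂) - (b₂ + b₂') by abel]
        exact norm_sub_le _ _
      linarith [abs_fst_add_abs_snd_le (b₁ - b₂')]
  have hfar : ‖b₁' - b₂'‖ ≤ ‖b₁ + b₁'‖ + ‖b₂ + b₂'‖ + ‖b₁ - b₂‖ := by
    rw [show b₁' - b₂' = (b₁ + b₁') - (b₂ + b₂') - (b₁ - b₂) by abel]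
    exact (norm_sub_le _ _).trans (add_le_add_left (norm_sub_le _ _) _)
  have hsup : ‖b₁ - b₂‖ ≤ |(b₁ - b₂).1| + |(b₁ - b₂).2| := by
    rw [Prod.norm_def, Real.norm_eq_abs, Real.norm_eq_abs]
    exact max_le (le_add_of_nonneg_right (abs_nonneg _)) (le_add_of_nonneg_left (abs_nonneg _))
  refine max_le (by linarith) ?_
  linarith [abs_fst_add_abs_snd_le (b₁' - b₂')]

theorem eventually_two_mul_rpow_lt {a : ℝ} (ha : a < 1) :
    ∀ᶠ n : ℕ in Filter.atTop, 0 < (n : ℝ) ∧ 2 * (n : ℝ) ^ a < n := by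
  have htend : Filter.Tendsto (fun n : ℕ => (n : ℝ) ^ (1 - a)) Filter.atTop Filter.atTop :=
    (tendsto_rpow_atTop (by linarith)).comp tendsto_natCast_atTop_atTop
  filter_upwards [htend.eventually_gt_atTop 2, Filter.eventually_gt_atTop 0] with n hn hn₀
  have hn₀' : (0 : ℝ) < n := Nat.cast_pos.2 hn₀
  have hsplit : (n : ℝ) ^ a * (n : ℝ) ^ (1 - a) = n := by
    rw [← Real.rpow_add hn₀', add_sub_cancel, Real.rpow_one]
  exact ⟨hn₀', by nlinarith [Real.rpow_pos_of_pos hn₀' a]⟩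

/-- two disjoint segments crossing the central box
`[-2n^a, 2n^a]²` with endpoints on the boundary of `[-n,n]²` have nearby
endpoints on each side (the labelling hypotheses encode that `b₁, b₂`, resp.
`b₁', b₂'`, are the "diametrically opposed" pairs). -/
theorem stmt_10 :
    ∃ C : ℝ, 0 < C ∧
      ∀ a : ℝ, 0 < a → a < 1 →
        ∃ n₀ : ℕ, ∀ n : ℕ, n₀ ≤ n →
          ∀ b₁ b₂ b₁' b₂' : ℝ × ℝ,
            b₁ ∈ frontier (Set.Icc ((-(n : ℝ), -(n : ℝ)) : ℝ × ℝ) ((n : ℝ), (n : ℝ))) →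
            b₂ ∈ frontier (Set.Icc ((-(n : ℝ), -(n : ℝ)) : ℝ × ℝ) ((n : ℝ), (n : ℝ))) →
            b₁' ∈ frontier (Set.Icc ((-(n : ℝ), -(n : ℝ)) : ℝ × ℝ) ((n : ℝ), (n : ℝ))) →
            b₂' ∈ frontier (Set.Icc ((-(n : ℝ), -(n : ℝ)) : ℝ × ℝ) ((n : ℝ), (n : ℝ))) →
            (segment ℝ b₁ b₁' ∩
              Set.Icc ((-(2 * (n : ℝ) ^ a), -(2 * (n : ℝ) ^ a)) : ℝ × ℝ)
                ((2 * (n : ℝ) ^ a), (2 * (n : ℝ) ^ a))).Nonempty →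
            (segment ℝ b₂ b₂' ∩
              Set.Icc ((-(2 * (n : ℝ) ^ a), -(2 * (n : ℝ) ^ a)) : ℝ × ℝ)
                ((2 * (n : ℝ) ^ a), (2 * (n : ℝ) ^ a))).Nonempty →
            Disjoint (segment ℝ b₁ b₁') (segment ℝ b₂ b₂') →
            (|(b₁ - b₂).1| + |(b₁ - b₂).2| ≤ |(b₁ - b₂').1| + |(b₁ - b₂').2|) →
            (|(b₁' - b₂').1| + |(b₁' - b₂').2| ≤ |(b₁' - b₂).1| + |(b₁' - b₂).2|) →
            max (|(b₁ - b₂).1| + |(b₁ - b₂).2|) (|(b₁' - b₂').1| + |(b₁' - b₂').2|)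
              ≤ C * (n : ℝ) ^ a := by
  refine ⟨448, by norm_num, fun a _ ha₁ => ?_⟩
  obtain ⟨n₀, hn₀⟩ := Filter.eventually_atTop.1 (eventually_two_mul_rpow_lt ha₁)
  refine ⟨n₀, fun n hn b₁ b₂ b₁' b₂' hb₁ hb₂ hb₁' hb₂' hseg₁ hseg₂ hdisj hpair _ => ?_⟩
  obtain ⟨hn₀, hr⟩ := hn₀ n hn
  rw [mem_frontier_Icc_neg_iff hn₀] at hb₁ hb₂ hb₁' hb₂'
  rw [Icc_neg_eq_closedBall] at hseg₁ hseg₂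
  obtain ⟨u₁, hu₁, hu₁r⟩ := hseg₁
  obtain ⟨u₂, hu₂, hu₂r⟩ := hseg₂
  rw [mem_closedBall_zero_iff] at hu₁r hu₂r
  have hε₁ : ‖b₁ + b₁'‖ ≤ 8 * (n : ℝ) ^ a :=
    (norm_add_le_of_mem_segment (hb₁.trans hb₁'.symm) hu₁).trans (by linarith)
  have hε₂ : ‖b₂ + b₂'‖ ≤ 8 * (n : ℝ) ^ a :=
    (norm_add_le_of_mem_segment (hb₂.trans hb₂'.symm) hu₂).trans (by linarith)
  have hK := abs_cross_le_of_abs_cross_le_abs_add hb₁.le hb₁'.le hb₂.le hε₁ hε₂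
    (abs_cross_le_abs_add_of_disjoint hb₁ hb₁' hu₁ (by linarith) hb₂.le hb₂'.le hdisj)
  refine (max_l1_le_of_norm_sub_le_or_norm_add_le hε₁ hε₂
    (norm_sub_le_or_norm_add_le_of_abs_cross_le hn₀ hb₁ hb₂ hK) hpair).trans_eq ?_
  ring
end

section
/- Let δ > 0 and suppose for every bounded measurable local function f (measurable with respect to a fixed sub-σ-algebra ℱ) and all n large there exist αₙ ∈ [0,1] with |μ(f) - αₙ A(f) - (1-αₙ) B(f)| ≤ C‖f‖_∞ n^{-δ}, where A, B are two fixed bounded linear functionals with A(1) = B(1) = 1 and A ≠ B on ℱ. Then the sequence αₙ converges, and μ(f) = α A(f) + (1-α) B(f) for all ℱ-measurable bounded f, where α = lim αₙ ∈ [0,1]. -/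
lemma aux_tendsto_zero (C K δ : ℝ) (hδ : 0 < δ) :
    Filter.Tendsto (fun n : ℕ => C * K * (n : ℝ) ^ (-δ)) Filter.atTop (nhds 0) := by
  have h : Filter.Tendsto (fun n : ℕ => ((n : ℝ)) ^ (-δ)) Filter.atTop (nhds 0) :=
    (tendsto_rpow_neg_atTop hδ).comp tendsto_natCast_atTop_atTop
  simpa using h.const_mul (C * K)

/-- squeeze: if |x n - a| ≤ b n eventually and b → 0 then x → a -/
lemma aux_squeeze (x : ℕ → ℝ) (a : ℝ) (b : ℕ → ℝ)
    (hb : Filter.Tendsto b Filter.atTop (nhds 0))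
    (h : ∀ᶠ n in Filter.atTop, |x n - a| ≤ b n) :
    Filter.Tendsto x Filter.atTop (nhds a) := by
  rw [tendsto_iff_dist_tendsto_zero]
  apply squeeze_zero' (by filter_upwards with n using dist_nonneg)
    (by filter_upwards [h] with n hn using by simpa [Real.dist_eq] using hn) hb

/-- limit-extraction argument underlying Corollary 1.2. -/
theorem stmt_12 {Ω : Type*} [MeasurableSpace Ω]
    (μ A B : (Ω → ℝ) → ℝ) (C δ : ℝ) (hC : 0 ≤ C) (hδ : 0 < δ)
    (hAadd : ∀ f g, A (f + g) = A f + A g)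
    (hBadd : ∀ f g, B (f + g) = B f + B g)
    (hμadd : ∀ f g, μ (f + g) = μ f + μ g)
    (hAsmul : ∀ (c : ℝ) f, A (c • f) = c * A f)
    (hBsmul : ∀ (c : ℝ) f, B (c • f) = c * B f)
    (hμsmul : ∀ (c : ℝ) f, μ (c • f) = c * μ f)
    (hApos : ∀ f, (∀ x, 0 ≤ f x) → 0 ≤ A f)
    (hBpos : ∀ f, (∀ x, 0 ≤ f x) → 0 ≤ B f)
    (hμpos : ∀ f, (∀ x, 0 ≤ f x) → 0 ≤ μ f)
    (hA1 : A (fun _ => 1) = 1) (hB1 : B (fun _ => 1) = 1) (hμ1 : μ (fun _ => 1) = 1)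
    (hAB : ∃ g : Ω → ℝ, Measurable g ∧ (∃ K : ℝ, ∀ x, |g x| ≤ K) ∧ A g ≠ B g)
    (α : ℕ → ℝ) (hα : ∀ n, α n ∈ Set.Icc (0 : ℝ) 1)
    (happ : ∀ f : Ω → ℝ, Measurable f → ∀ K : ℝ, 0 ≤ K → (∀ x, |f x| ≤ K) →
      ∃ N : ℕ, ∀ n ≥ N, |μ f - α n * A f - (1 - α n) * B f| ≤ C * K * (n : ℝ) ^ (-δ)) :
    ∃ l ∈ Set.Icc (0 : ℝ) 1,
      Filter.Tendsto α Filter.atTop (nhds l) ∧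
      ∀ f : Ω → ℝ, Measurable f → (∃ K : ℝ, ∀ x, |f x| ≤ K) →
        μ f = l * A f + (1 - l) * B f := by
  obtain ⟨g, hgm, ⟨K, hgK⟩, hgAB⟩ := hAB
  -- general approximation in eventually form
  have key : ∀ f : Ω → ℝ, Measurable f → (∃ K : ℝ, ∀ x, |f x| ≤ K) →
      Filter.Tendsto (fun n => α n * A f + (1 - α n) * B f) Filter.atTop (nhds (μ f)) := by
    intro f hf ⟨K', hK'⟩
    obtain ⟨N, hN⟩ := happ f hf (max K' 0) (le_max_right _ _)
      (fun x => (hK' x).trans (le_max_left _ _))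
    apply aux_squeeze _ _ _ (aux_tendsto_zero C (max K' 0) δ hδ)
    filter_upwards [Filter.eventually_ge_atTop N] with n hn
    have := hN n hn
    calc |α n * A f + (1 - α n) * B f - μ f|
        = |μ f - α n * A f - (1 - α n) * B f| := by rw [abs_sub_comm]; ring_nf
      _ ≤ _ := this
  have hD : A g - B g ≠ 0 := sub_ne_zero.mpr hgAB
  set l : ℝ := (μ g - B g) / (A g - B g) with hl
  have hαg := key g hgm ⟨K, hgK⟩
  -- αₙ = ((αₙ A g + (1-αₙ) B g) - B g) / (A g - B g)
  have htend : Filter.Tendsto α Filter.atTop (nhds l) := by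
    have : Filter.Tendsto (fun n => ((α n * A g + (1 - α n) * B g) - B g) / (A g - B g))
        Filter.atTop (nhds l) := (hαg.sub_const (B g)).div_const _
    convert this using 2 with n
    field_simp
    ring
  have hl01 : l ∈ Set.Icc (0 : ℝ) 1 := by
    constructor
    · exact le_of_tendsto_of_tendsto' tendsto_const_nhds htend (fun n => (hα n).1)
    · exact le_of_tendsto_of_tendsto' htend tendsto_const_nhds (fun n => (hα n).2)
  refine ⟨l, hl01, htend, fun f hf hbd => ?_⟩
  have h1 : Filter.Tendsto (fun n => α n * A f + (1 - α n) * B f) Filter.atTop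
      (nhds (l * A f + (1 - l) * B f)) := by
    exact ((htend.mul_const (A f)).add
      (((tendsto_const_nhds (x := (1:ℝ))).sub htend).mul_const (B f)))
  exact tendsto_nhds_unique (key f hf hbd) h1
end
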